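/- Let f be a homeomorphism of a compact metric space K and let μ be a nonatomic Borel probability measure compatible with inverse shadowing for f. Then for every point p ∈ supp(μ) and every ε > 0 there exists d > 0 such that for every d-method g = {g_k : k ∈ ℤ} for f there exists a full trajectory {x_k}_{k∈ℤ} of g with dist(x_k, f^k(p)) ≤ ε for all k ∈ ℤ. -/

import Mathlib

open MeasureTheory Filter Topology

/-- `Φ(ε,d,f)`: the set of points `p` such that for every `d`-method `g = {g_k}_{k∈ℤ}` for the
homeomorphism `f` there exists a full trajectory of `g` that `ε`-traces the `f`-orbit of `p`. -/
def Phi {K : Type*} [MetricSpace K] (f : K ≃ₜ K) (ε d : ℝ) : Set K :=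
  {p | ∀ g : ℤ → K → K, (∀ k, Continuous (g k)) → (∀ k z, dist (g k z) (f z) ≤ d) →
    ∃ x : ℤ → K, (∀ k, x (k + 1) = g k (x k)) ∧ ∀ k : ℤ, dist (x k) ((f.toEquiv ^ k) p) ≤ ε}

/-!
`Φ(ε,d,f)` is closed. If `p` is a limit of points `q ∈ Φ(ε,d,f)`, then on each finite window
`|k| ≤ n` the orbits of `q` and `p` stay `η`-close for `q` near `p`, so some trajectory of a given
`d`-method `(ε + η)`-traces the orbit of `p` on that window. The trajectories of `g` form a closed,
hence compact, subset of `ℤ → K`, and a nested-intersection argument yields one that `ε`-traces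
the whole orbit. Since `μ` charges every neighbourhood of a support point `p`, each neighbourhood
meets `Φ(ε,d,f)`, so `p` lies in its closure, which is `Φ(ε,d,f)` itself.
-/

theorem Homeomorph.continuous_toEquiv_zpow {X : Type*} [TopologicalSpace X] (f : X ≃ₜ X)
    (k : ℤ) : Continuous ⇑(f.toEquiv ^ k) := by
  let toPerm : (X ≃ₜ X) →* Equiv.Perm X := ⟨⟨Homeomorph.toEquiv, rfl⟩, fun _ _ => rfl⟩
  rw [← show toPerm (f ^ k) = f.toEquiv ^ k from map_zpow toPerm f k]
  exact (f ^ k).continuous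

section Trajectory

variable {K : Type*}

def IsTrajectory (g : ℤ → K → K) (x : ℤ → K) : Prop :=
  ∀ k, x (k + 1) = g k (x k)

theorem isClosed_setOf_isTrajectory [TopologicalSpace K] [T2Space K] {g : ℤ → K → K}
    (hg : ∀ k, Continuous (g k)) : IsClosed {x | IsTrajectory g x} := by
  simp only [IsTrajectory, Set.ofPred_forall]
  exact isClosed_iInter fun k => isClosed_eq (continuous_apply _) ((hg k).comp (continuous_apply k))

variable [MetricSpace K]

def windowTracing (g : ℤ → K → K) (y : ℤ → K) (ε : ℝ) (n : ℕ) : Set (ℤ → K) :=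
  {x | IsTrajectory g x ∧ ∀ k : ℤ, |k| ≤ n → dist (x k) (y k) ≤ ε}

theorem isClosed_windowTracing {g : ℤ → K → K} (hg : ∀ k, Continuous (g k)) (y : ℤ → K)
    (ε : ℝ) (n : ℕ) : IsClosed (windowTracing g y ε n) := by
  refine (isClosed_setOf_isTrajectory hg).inter ?_
  show IsClosed {x : ℤ → K | ∀ k : ℤ, |k| ≤ n → dist (x k) (y k) ≤ ε}
  simp only [Set.ofPred_forall]
  exact isClosed_iInter fun k => isClosed_iInter fun _ =>
    isClosed_le ((continuous_apply k).dist continuous_const) continuous_const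

theorem windowTracing_mono {g : ℤ → K → K} {y : ℤ → K} {ε ε' : ℝ} {n n' : ℕ} (hε : ε ≤ ε')
    (hn : n ≤ n') : windowTracing g y ε n' ⊆ windowTracing g y ε' n :=
  fun _ ⟨htraj, htrace⟩ =>
    ⟨htraj, fun k hk => (htrace k (hk.trans (by exact_mod_cast hn))).trans hε⟩

theorem exists_isTrajectory_dist_le_of_windowTracing [CompactSpace K] {g : ℤ → K → K}
    (hg : ∀ k, Continuous (g k)) (y : ℤ → K) (ε : ℝ)
    (hwin : ∀ (n : ℕ), ∀ η > (0 : ℝ), (windowTracing g y (ε + η) n).Nonempty) :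
    ∃ x, IsTrajectory g x ∧ ∀ k, dist (x k) (y k) ≤ ε := by
  set C : ℕ → Set (ℤ → K) := fun n => windowTracing g y (ε + 1 / (n + 1)) n
  have hC : ∀ n, IsClosed (C n) := fun n => isClosed_windowTracing hg y _ n
  have hanti : ∀ n, C (n + 1) ⊆ C n := fun n =>
    windowTracing_mono (by gcongr; simp) (Nat.le_succ n)
  obtain ⟨x, hx⟩ := IsCompact.nonempty_iInter_of_sequence_nonempty_isCompact_isClosed C hanti
    (fun n => hwin n _ Nat.one_div_pos_of_nat) (hC 0).isCompact hC
  have hxC : ∀ n, x ∈ C n := Set.mem_iInter.1 hx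
  refine ⟨x, (hxC 0).1, fun k => le_of_forall_pos_lt_add fun η hη => ?_⟩
  obtain ⟨n, hkn, hnη⟩ : ∃ n : ℕ, |k| ≤ n ∧ 1 / ((n : ℝ) + 1) < η := by
    obtain ⟨m, hm⟩ := exists_nat_one_div_lt hη
    refine ⟨max m k.natAbs, ?_, lt_of_le_of_lt ?_ hm⟩
    · rw [Int.abs_eq_natAbs]
      exact_mod_cast le_max_right _ _
    gcongr
    exact_mod_cast le_max_left _ _
  linarith [(hxC n).2 k hkn]

theorem windowTracing_nonempty_of_mem_closure_Phi {f : K ≃ₜ K} {ε d : ℝ} {p : K}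
    (hp : p ∈ closure (Phi f ε d)) {g : ℤ → K → K} (hg : ∀ k, Continuous (g k))
    (hgd : ∀ k z, dist (g k z) (f z) ≤ d) (n : ℕ) {η : ℝ} (hη : 0 < η) :
    (windowTracing g (fun k => (f.toEquiv ^ k) p) (ε + η) n).Nonempty := by
  set U : Set K := ⋂ k ∈ Finset.Icc (-(n : ℤ)) n,
    ⇑(f.toEquiv ^ k) ⁻¹' Metric.ball ((f.toEquiv ^ k) p) η
  have hU : IsOpen U := isOpen_biInter_finset fun k _ =>
    Metric.isOpen_ball.preimage (f.continuous_toEquiv_zpow k)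
  have hpU : p ∈ U := by
    simp only [U, Set.mem_iInter, Set.mem_preimage]
    exact fun k _ => Metric.mem_ball_self hη
  obtain ⟨q, hqU, hqΦ⟩ := mem_closure_iff.1 hp U hU hpU
  obtain ⟨x, htraj, htrace⟩ := hqΦ g hg hgd
  refine ⟨x, htraj, fun k hk => ?_⟩
  have hq : dist ((f.toEquiv ^ k) q) ((f.toEquiv ^ k) p) < η := by
    simp only [U, Set.mem_iInter, Set.mem_preimage, Metric.mem_ball] at hqU
    exact hqU k (Finset.mem_Icc.2 (abs_le.1 hk))
  linarith [dist_triangle (x k) ((f.toEquiv ^ k) q) ((f.toEquiv ^ k) p), htrace k]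

theorem isClosed_Phi [CompactSpace K] (f : K ≃ₜ K) (ε d : ℝ) : IsClosed (Phi f ε d) :=
  isClosed_of_closure_subset fun _ hp _ hg hgd =>
    exists_isTrajectory_dist_le_of_windowTracing hg _ ε fun n _ hη =>
      windowTracing_nonempty_of_mem_closure_Phi hp hg hgd n hη

end Trajectory

theorem stmt14 {K : Type*} [MetricSpace K] [CompactSpace K] [MeasurableSpace K]
    (f : K ≃ₜ K) (μ : Measure K)
    (hcompat : ∀ ε > (0 : ℝ), ∃ d > (0 : ℝ), ∀ A : Set K, 0 < μ A →
      (A ∩ Phi f ε d).Nonempty)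
    (p : K) (hp : ∀ U : Set K, IsOpen U → p ∈ U → 0 < μ U) :
    ∀ ε > (0 : ℝ), ∃ d > (0 : ℝ), ∀ g : ℤ → K → K,
      (∀ k, Continuous (g k)) → (∀ k z, dist (g k z) (f z) ≤ d) →
      ∃ x : ℤ → K, (∀ k, x (k + 1) = g k (x k)) ∧ ∀ k : ℤ, dist (x k) ((f.toEquiv ^ k) p) ≤ ε := by
  intro ε hε
  obtain ⟨d, hd, hΦ⟩ := hcompat ε hε
  have hp_closure : p ∈ closure (Phi f ε d) :=
    mem_closure_iff.2 fun U hU hpU => hΦ U (hp U hU hpU)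
  exact ⟨d, hd, (isClosed_Phi f ε d).closure_subset hp_closure⟩
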